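/- arXiv:2106.15373 — 4 statements merged into one kernel-verified Lean document; each statement's English description precedes it below -/
import Mathlib

section
/- Let n ≥ 0. If every ALC concept of height at most n belongs to ρ*(⊤) (the set of concepts reachable from ⊤ by iterated application of ρ), then every ALC concept of height n + 1 also belongs to ρ*(⊤). -/
/-- ALC concepts over atomic concept names `C` and role names `R`. -/
inductive ALC (C R : Type) : Type
  | top  : ALC C R
  | bot  : ALC C R
  | atom : C → ALC C R
  | neg  : ALC C R → ALC C R
  | conj : ALC C R → ALC C R → ALC C R
  | disj : ALC C R → ALC C R → ALC C R
  | ex   : R → ALC C R → ALC C R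
  | all  : R → ALC C R → ALC C R

namespace ALC

variable {C R : Type}

/-- The length of an ALC concept. -/
def len : ALC C R → ℕ
  | top      => 1
  | bot      => 1
  | atom _   => 1
  | neg X    => X.len + 1
  | conj X Y => X.len + Y.len + 1
  | disj X Y => X.len + Y.len + 1
  | ex _ X   => X.len + 2
  | all _ X  => X.len + 2

/-- The height of (the syntax tree of) an ALC concept. -/
def height : ALC C R → ℕ
  | top      => 0
  | bot      => 0
  | atom _   => 0
  | neg X    => X.height + 1
  | conj X Y => max X.height Y.height + 1
  | disj X Y => max X.height Y.height + 1
  | ex _ X   => X.height + 1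
  | all _ X  => X.height + 1

/-- The one-step refinement operator ρ: `Rho X D` means `D ∈ ρ(X)`. -/
inductive Rho : ALC C R → ALC C R → Prop
  | to_ex (r : R) (X : ALC C R)    : Rho X (ex r X)
  | to_all (r : R) (X : ALC C R)   : Rho X (all r X)
  | to_conj_top (X : ALC C R)      : Rho X (conj X top)
  | to_disj_top (X : ALC C R)      : Rho X (disj X top)
  | to_neg (X : ALC C R)           : Rho X (neg X)
  | refl (X : ALC C R)             : Rho X X
  | ex_cong (r : R) {X X' : ALC C R} : Rho X X' → Rho (ex r X) (ex r X')
  | all_cong (r : R) {X X' : ALC C R} : Rho X X' → Rho (all r X) (all r X')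
  | neg_cong {X X' : ALC C R}      : Rho X X' → Rho (neg X) (neg X')
  | disj_cong {X X' Y Y' : ALC C R} : Rho X X' → Rho Y Y' → Rho (disj X Y) (disj X' Y')
  | conj_cong {X X' Y Y' : ALC C R} : Rho X X' → Rho Y Y' → Rho (conj X Y) (conj X' Y')
  | top_to_atom (A : C)            : Rho top (atom A)
  | top_to_top                     : Rho (top : ALC C R) top
  | top_to_bot                     : Rho (top : ALC C R) bot

/-- `RhoStar X D` means `D ∈ ρ*(X)`: reflexive-transitive closure of one-step refinement. -/
def RhoStar : ALC C R → ALC C R → Prop := Relation.ReflTransGen Rho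

end ALC


theorem rhoStar_conj_right {C R : Type} (Y : ALC C R) {Z Z' : ALC C R}
    (h : ALC.RhoStar Z Z') : ALC.RhoStar (ALC.conj Y Z) (ALC.conj Y Z') := by
  induction h with
  | refl => exact Relation.ReflTransGen.refl
  | tail _ step ih => exact ih.tail (ALC.Rho.conj_cong (ALC.Rho.refl Y) step)

theorem rhoStar_disj_right {C R : Type} (Y : ALC C R) {Z Z' : ALC C R}
    (h : ALC.RhoStar Z Z') : ALC.RhoStar (ALC.disj Y Z) (ALC.disj Y Z') := by
  induction h with
  | refl => exact Relation.ReflTransGen.refl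
  | tail _ step ih => exact ih.tail (ALC.Rho.disj_cong (ALC.Rho.refl Y) step)

/-- If ρ generates every concept of height at most n, it generates every concept of height n+1. -/
theorem rhoStar_top_succ_of_le {C R : Type} (n : ℕ)
    (ih : ∀ X : ALC C R, X.height ≤ n → ALC.RhoStar ALC.top X) :
    ∀ X : ALC C R, X.height = n + 1 → ALC.RhoStar ALC.top X := by
  intro X hX
  cases X with
  | top => simp [ALC.height] at hX
  | bot => simp [ALC.height] at hX
  | atom A => simp [ALC.height] at hX
  | neg Y =>
      have hY : Y.height ≤ n := by simp [ALC.height] at hX; omega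
      exact (ih Y hY).trans (Relation.ReflTransGen.single (ALC.Rho.to_neg Y))
  | ex r Y =>
      have hY : Y.height ≤ n := by simp [ALC.height] at hX; omega
      exact (ih Y hY).trans (Relation.ReflTransGen.single (ALC.Rho.to_ex r Y))
  | all r Y =>
      have hY : Y.height ≤ n := by simp [ALC.height] at hX; omega
      exact (ih Y hY).trans (Relation.ReflTransGen.single (ALC.Rho.to_all r Y))
  | conj Y Z =>
      have hY : Y.height ≤ n := by simp [ALC.height] at hX; omega
      have hZ : Z.height ≤ n := by simp [ALC.height] at hX; omega
      have h1 : ALC.RhoStar (ALC.top : ALC C R) (ALC.conj Y ALC.top) :=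
        (ih Y hY).trans (Relation.ReflTransGen.single (ALC.Rho.to_conj_top Y))
      have h2 : ALC.RhoStar (ALC.conj Y ALC.top) (ALC.conj Y Z) :=
        rhoStar_conj_right Y (ih Z hZ)
      exact h1.trans h2
  | disj Y Z =>
      have hY : Y.height ≤ n := by simp [ALC.height] at hX; omega
      have hZ : Z.height ≤ n := by simp [ALC.height] at hX; omega
      have h1 : ALC.RhoStar (ALC.top : ALC C R) (ALC.disj Y ALC.top) :=
        (ih Y hY).trans (Relation.ReflTransGen.single (ALC.Rho.to_disj_top Y))
      have h2 : ALC.RhoStar (ALC.disj Y ALC.top) (ALC.disj Y Z) :=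
        rhoStar_disj_right Y (ih Z hZ)
      exact h1.trans h2
end

section
/- The refinement operator ρ is complete: every ALC concept built from the concept names N_C and roles R belongs to ρ*(⊤), the set of concepts reachable from ⊤ by iterated application of ρ. -/
namespace ALC

variable {C R : Type}

theorem rhoStar_neg {X Y : ALC C R} (h : RhoStar X Y) : RhoStar (neg X) (neg Y) :=
  Relation.ReflTransGen.lift neg (fun _ _ h => Rho.neg_cong h) _ _ h

theorem rhoStar_ex (r : R) {X Y : ALC C R} (h : RhoStar X Y) : RhoStar (ex r X) (ex r Y) :=
  Relation.ReflTransGen.lift (ex r) (fun _ _ h => Rho.ex_cong r h) _ _ h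

theorem rhoStar_all (r : R) {X Y : ALC C R} (h : RhoStar X Y) : RhoStar (all r X) (all r Y) :=
  Relation.ReflTransGen.lift (all r) (fun _ _ h => Rho.all_cong r h) _ _ h

theorem rhoStar_conj {X Y X' Y' : ALC C R} (h1 : RhoStar X X') (h2 : RhoStar Y Y') :
    RhoStar (conj X Y) (conj X' Y') := by
  refine Relation.ReflTransGen.trans
    (Relation.ReflTransGen.lift (fun Z => conj Z Y) (fun _ _ h => Rho.conj_cong h (Rho.refl Y)) _ _ h1)
    (Relation.ReflTransGen.lift (fun Z => conj X' Z) (fun _ _ h => Rho.conj_cong (Rho.refl X') h) _ _ h2)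

theorem rhoStar_disj {X Y X' Y' : ALC C R} (h1 : RhoStar X X') (h2 : RhoStar Y Y') :
    RhoStar (disj X Y) (disj X' Y') := by
  refine Relation.ReflTransGen.trans
    (Relation.ReflTransGen.lift (fun Z => disj Z Y) (fun _ _ h => Rho.disj_cong h (Rho.refl Y)) _ _ h1)
    (Relation.ReflTransGen.lift (fun Z => disj X' Z) (fun _ _ h => Rho.disj_cong (Rho.refl X') h) _ _ h2)

end ALC


/-- Completeness: ρ generates every ALC concept from ⊤. -/
theorem rhoStar_top_complete {C R : Type} (X : ALC C R) :
    ALC.RhoStar ALC.top X := by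
  induction X with
  | top => exact Relation.ReflTransGen.refl
  | bot => exact Relation.ReflTransGen.single ALC.Rho.top_to_bot
  | atom A => exact Relation.ReflTransGen.single (ALC.Rho.top_to_atom A)
  | neg X ih =>
      exact Relation.ReflTransGen.trans
        (Relation.ReflTransGen.single (ALC.Rho.to_neg _)) (ALC.rhoStar_neg ih)
  | conj X Y ihX ihY =>
      exact Relation.ReflTransGen.trans
        (Relation.ReflTransGen.single (ALC.Rho.to_conj_top _)) (ALC.rhoStar_conj ihX ihY)
  | disj X Y ihX ihY =>
      exact Relation.ReflTransGen.trans
        (Relation.ReflTransGen.single (ALC.Rho.to_disj_top _)) (ALC.rhoStar_disj ihX ihY)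
  | ex r X ih =>
      exact Relation.ReflTransGen.trans
        (Relation.ReflTransGen.single (ALC.Rho.to_ex r _)) (ALC.rhoStar_ex r ih)
  | all r X ih =>
      exact Relation.ReflTransGen.trans
        (Relation.ReflTransGen.single (ALC.Rho.to_all r _)) (ALC.rhoStar_all r ih)
end

section
/- If ALC concepts X and Y both belong to ρ*(⊤), then the conjunction X ⊓ Y also belongs to ρ*(⊤). -/
namespace ALC

variable {C R : Type}

theorem rhoStar_conj_cong {X X' Y Y' : ALC C R} (hX : RhoStar X X') (hY : RhoStar Y Y') :
    RhoStar (conj X Y) (conj X' Y') := by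
  induction hX with
  | refl =>
    induction hY with
    | refl => exact Relation.ReflTransGen.refl
    | tail _ h ih => exact ih.tail (Rho.conj_cong (Rho.refl _) h)
  | tail _ h ih => exact ih.tail (Rho.conj_cong h (Rho.refl _))

end ALC


/-- If X and Y are generated by ρ from ⊤, so is X ⊓ Y. -/
theorem rhoStar_top_conj {C R : Type} (X Y : ALC C R)
    (hX : ALC.RhoStar ALC.top X) (hY : ALC.RhoStar ALC.top Y) :
    ALC.RhoStar ALC.top (ALC.conj X Y) := by
  exact (hX.tail (ALC.Rho.to_conj_top X)).trans
    (ALC.rhoStar_conj_cong Relation.ReflTransGen.refl hY)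
end

section
/- If ALC concepts X and Y both belong to ρ*(⊤), then the disjunction X ⊔ Y also belongs to ρ*(⊤). -/
theorem rhoStar_disj_cong {C R : Type} {X X' Y Y' : ALC C R}
    (hX : ALC.RhoStar X X') (hY : ALC.RhoStar Y Y') :
    ALC.RhoStar (ALC.disj X Y) (ALC.disj X' Y') := by
  have h1 : ALC.RhoStar (ALC.disj X Y) (ALC.disj X' Y) := by
    induction hX with
    | refl => exact Relation.ReflTransGen.refl
    | tail _ h ih => exact ih.tail (ALC.Rho.disj_cong h (ALC.Rho.refl _))
  refine h1.trans ?_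
  induction hY with
  | refl => exact Relation.ReflTransGen.refl
  | tail _ h ih => exact ih.tail (ALC.Rho.disj_cong (ALC.Rho.refl _) h)

/-- If X and Y are generated by ρ from ⊤, so is X ⊔ Y. -/
theorem rhoStar_top_disj {C R : Type} (X Y : ALC C R)
    (hX : ALC.RhoStar ALC.top X) (hY : ALC.RhoStar ALC.top Y) :
    ALC.RhoStar ALC.top (ALC.disj X Y) := by
  exact (Relation.ReflTransGen.single (ALC.Rho.to_disj_top _)).trans
    (rhoStar_disj_cong hX hY)
end
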